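/- arXiv:2007.06979 — 6 statements merged into one kernel-verified Lean document; each statement's English description precedes it below -/
import Mathlib

section
/- For any n ∈ ℕ and any parity vector p ∈ {0,1}^n, there exists a unique z ∈ ℕ with z < 2^n such that for all i < n, T^i(z) ≡ p_i (mod 2), where T is the Collatz map. (Every finite parity vector is feasible, and the residue of z mod 2^n is determined by p.) -/
/-- The Collatz map. -/
def collatzT (x : ℕ) : ℕ := if x % 2 = 0 then x / 2 else (3 * x + 1) / 2

lemma collatz_shift (n : ℕ) : ∀ z a : ℕ, ∃ j : ℕ,
    collatzT^[n] (z + 2 ^ n * a) = collatzT^[n] z + 3 ^ j * a := by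
  induction n with
  | zero => intro z a; exact ⟨0, by simp⟩
  | succ n ih =>
    intro z a
    rw [Function.iterate_succ_apply, Function.iterate_succ_apply]
    rcases Nat.even_or_odd z with he | ho
    · have hz : z % 2 = 0 := Nat.even_iff.mp he
      have h1 : collatzT (z + 2 ^ (n + 1) * a) = collatzT z + 2 ^ n * a := by
        have h2 : 2 ^ (n + 1) * a = 2 * (2 ^ n * a) := by rw [pow_succ]; ring
        unfold collatzT
        rw [h2]
        set m := 2 ^ n * a with hm
        rw [if_pos (by omega), if_pos hz]
        omega
      obtain ⟨j, hj⟩ := ih (collatzT z) a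
      exact ⟨j, by rw [h1, hj]⟩
    · have hz : z % 2 = 1 := Nat.odd_iff.mp ho
      have h1 : collatzT (z + 2 ^ (n + 1) * a) = collatzT z + 2 ^ n * (3 * a) := by
        have h2 : 2 ^ (n + 1) * a = 2 * (2 ^ n * a) := by rw [pow_succ]; ring
        have h3 : 2 ^ n * (3 * a) = 3 * (2 ^ n * a) := by ring
        unfold collatzT
        rw [h2, h3]
        set m := 2 ^ n * a with hm
        rw [if_neg (by omega), if_neg (by omega)]
        omega
      obtain ⟨j, hj⟩ := ih (collatzT z) (3 * a)
      refine ⟨j + 1, by rw [h1, hj]; ring⟩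

lemma collatz_inj (n : ℕ) : ∀ z1 z2 : ℕ, z1 ≤ z2 →
    (∀ i < n, collatzT^[i] z1 % 2 = collatzT^[i] z2 % 2) → 2 ^ n ∣ z2 - z1 := by
  induction n with
  | zero => simp
  | succ n ih =>
    intro z1 z2 hle h
    obtain ⟨a, ha⟩ := ih z1 z2 hle (fun i hi => h i (by omega))
    have hz2 : z2 = z1 + 2 ^ n * a := by omega
    obtain ⟨j, hj⟩ := collatz_shift n z1 a
    have hp := h n (lt_add_one n)
    rw [hz2, hj] at hp
    have h3 : 3 ^ j % 2 = 1 := by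
      simp [Nat.pow_mod]
    rw [Nat.add_mod, Nat.mul_mod, h3] at hp
    have hx := Nat.mod_lt (collatzT^[n] z1) (show 0 < 2 by norm_num)
    have hax := Nat.mod_lt a (show 0 < 2 by norm_num)
    have haeven : a % 2 = 0 := by omega
    refine ⟨a / 2, ?_⟩
    rw [ha, pow_succ, mul_assoc]
    congr 1
    omega

theorem stmt_8 (n : ℕ) (p : Fin n → Fin 2) :
    ∃! z : ℕ, z < 2 ^ n ∧ ∀ i : Fin n, collatzT^[(i : ℕ)] z % 2 = (p i : ℕ) := by
  set F : Fin (2 ^ n) → (Fin n → Fin 2) :=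
    fun z i => ⟨collatzT^[(i : ℕ)] z % 2, Nat.mod_lt _ (by norm_num)⟩ with hF
  have hinj : Function.Injective F := by
    intro z1 z2 h
    have key : ∀ (a b : Fin (2 ^ n)), a.val ≤ b.val → F a = F b → a = b := by
      intro a b hab hfab
      have hpar : ∀ i < n, collatzT^[i] a.val % 2 = collatzT^[i] b.val % 2 := by
        intro i hi
        have := congrArg Fin.val (congrFun hfab ⟨i, hi⟩)
        simpa [hF] using this
      have hdvd := collatz_inj n a.val b.val hab hpar
      have hb := b.isLt
      rcases Nat.eq_zero_or_pos (b.val - a.val) with h0 | h0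
      · exact Fin.ext (by omega)
      · exact absurd (Nat.le_of_dvd h0 hdvd) (by omega)
    rcases le_total z1.val z2.val with hle | hle
    · exact key z1 z2 hle h
    · exact (key z2 z1 hle h.symm).symm
  have hbij : Function.Bijective F := by
    rw [Fintype.bijective_iff_injective_and_card]
    exact ⟨hinj, by simp⟩
  obtain ⟨z, hz⟩ := hbij.2 p
  refine ⟨z.val, ⟨z.isLt, fun i => ?_⟩, fun y hy => ?_⟩
  · have := congrArg Fin.val (congrFun hz i)
    simpa [hF] using this
  · obtain ⟨hy1, hy2⟩ := hy
    have hzp : ∀ i : Fin n, collatzT^[(i : ℕ)] z.val % 2 = (p i : ℕ) := by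
      intro i
      have := congrArg Fin.val (congrFun hz i)
      simpa [hF] using this
    have hpar : ∀ i < n, collatzT^[i] y % 2 = collatzT^[i] z.val % 2 := by
      intro i hi
      rw [hy2 ⟨i, hi⟩, hzp ⟨i, hi⟩]
    rcases le_total y z.val with hle | hle
    · have hdvd := collatz_inj n y z.val hle (hpar)
      have := Nat.eq_zero_of_dvd_of_lt hdvd (by omega)
      omega
    · have hdvd := collatz_inj n z.val y hle (fun i hi => (hpar i hi).symm)
      have := Nat.eq_zero_of_dvd_of_lt hdvd (by omega)
      omega
end

section
/- If z₁, z₂ ∈ ℕ satisfy z₁ ≡ z₂ (mod 2^n), then for all i ≤ n we have T^i(z₁) ≡ T^i(z₂) (mod 2^{n-i}); in particular z₁ and z₂ have the same parity vector of length n. -/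
lemma halve_mod (m x y : ℕ) (hx : x % 2 = 0) (hy : y % 2 = 0)
    (h : x % (2 * m) = y % (2 * m)) : x / 2 % m = y / 2 % m := by
  have hx2 : 2 * (x / 2) = x := by omega
  have hy2 : 2 * (y / 2) = y := by omega
  rw [← hx2, ← hy2, Nat.mul_mod_mul_left, Nat.mul_mod_mul_left] at h
  omega

lemma collatz_step (k a b : ℕ) (h : a % 2 ^ (k + 1) = b % 2 ^ (k + 1)) :
    collatzT a % 2 ^ k = collatzT b % 2 ^ k := by
  have h' : a ≡ b [MOD 2 ^ (k + 1)] := h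
  have hpar : a % 2 = b % 2 := h'.of_dvd (dvd_pow_self 2 k.succ_ne_zero)
  have hpow : (2 : ℕ) ^ (k + 1) = 2 * 2 ^ k := by ring
  unfold collatzT
  by_cases hae : a % 2 = 0
  · rw [if_pos hae, if_pos (hpar ▸ hae)]
    exact halve_mod _ _ _ hae (hpar ▸ hae) (by rw [← hpow]; exact h)
  · rw [if_neg hae, if_neg (hpar ▸ hae)]
    have h3 : (3 * a + 1) % 2 ^ (k + 1) = (3 * b + 1) % 2 ^ (k + 1) :=
      ((h'.mul_left 3).add_right 1)
    exact halve_mod _ _ _ (by omega) (by omega) (by rw [← hpow]; exact h3)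

theorem stmt_9 (n : ℕ) (z₁ z₂ : ℕ) (h : z₁ % 2 ^ n = z₂ % 2 ^ n) :
    (∀ i ≤ n, collatzT^[i] z₁ % 2 ^ (n - i) = collatzT^[i] z₂ % 2 ^ (n - i)) ∧
    (∀ i < n, collatzT^[i] z₁ % 2 = collatzT^[i] z₂ % 2) := by
  have main : ∀ i ≤ n, collatzT^[i] z₁ % 2 ^ (n - i) = collatzT^[i] z₂ % 2 ^ (n - i) := by
    intro i
    induction i with
    | zero => intro _; simpa using h
    | succ i ih =>
      intro hi
      have hii : i ≤ n := by omega
      have := ih hii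
      have hk : n - i = (n - (i + 1)) + 1 := by omega
      rw [hk] at this
      rw [Function.iterate_succ_apply', Function.iterate_succ_apply']
      exact collatz_step _ _ _ this
  refine ⟨main, fun i hi => ?_⟩
  have := main i (le_of_lt hi)
  have hd : (2 : ℕ) ∣ 2 ^ (n - i) := dvd_pow_self 2 (by omega)
  exact (Nat.ModEq.of_dvd hd this : _)
end

section
/- If z ∈ ℕ, z > 0, satisfies z = T^n(z) with n ≥ 1, and k is the number of odd iterates among T^0(z),…,T^{n-1}(z), then 2^n > 3^k, and moreover z·(2^n − 3^k) equals a positive integer of the form Σ_{j} 3^{k-1-j} 2^{e_j} for suitable exponents; in particular k < n. -/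
lemma collatzT_two_mul (x : ℕ) :
    2 * collatzT x = if x % 2 = 0 then x else 3 * x + 1 := by
  unfold collatzT
  split <;> omega

lemma collatz_key (z : ℕ) :
    ∀ n k, k = ((Finset.range n).filter fun i => collatzT^[i] z % 2 = 1).card →
    ∃ e : Fin k → ℕ,
      2 ^ n * collatzT^[n] z = 3 ^ k * z + ∑ j : Fin k, 3 ^ (k - 1 - (j : ℕ)) * 2 ^ e j := by
  intro n
  induction n with
  | zero =>
    intro k hk
    simp at hk
    subst hk
    exact ⟨Fin.elim0, by simp⟩
  | succ n ih =>
    intro k hk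
    rw [Finset.range_add_one, Finset.filter_insert] at hk
    set F := (Finset.range n).filter (fun i => collatzT^[i] z % 2 = 1) with hF
    obtain ⟨e, he⟩ := ih F.card rfl
    by_cases hodd : collatzT^[n] z % 2 = 1
    · rw [if_pos hodd, Finset.card_insert_of_notMem (by simp [hF])] at hk
      subst hk
      refine ⟨Fin.snoc e n, ?_⟩
      have h2 : 2 * collatzT (collatzT^[n] z) = 3 * collatzT^[n] z + 1 := by
        rw [collatzT_two_mul, if_neg (by omega)]
      rw [Function.iterate_succ_apply', pow_succ]
      have hL : 2 ^ n * 2 * collatzT (collatzT^[n] z) =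
          3 * (2 ^ n * collatzT^[n] z) + 2 ^ n := by
        rw [mul_assoc, h2]; ring
      rw [hL, he, Fin.sum_univ_castSucc]
      simp only [Fin.snoc_castSucc, Fin.snoc_last, Fin.coe_castSucc, Fin.val_last]
      have hterm : ∀ i : Fin F.card,
          3 ^ (F.card + 1 - 1 - (i : ℕ)) * 2 ^ e i
            = 3 * (3 ^ (F.card - 1 - (i : ℕ)) * 2 ^ e i) := by
        intro i
        have : F.card + 1 - 1 - (i : ℕ) = (F.card - 1 - (i : ℕ)) + 1 := by
          have := i.isLt; omega
        rw [this, pow_succ]; ring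
      rw [Finset.sum_congr rfl (fun i _ => hterm i), ← Finset.mul_sum]
      have : F.card + 1 - 1 - F.card = 0 := by omega
      rw [this, pow_succ]
      ring
    · rw [if_neg hodd] at hk
      subst hk
      refine ⟨e, ?_⟩
      have h2 : 2 * collatzT (collatzT^[n] z) = collatzT^[n] z := by
        rw [collatzT_two_mul, if_pos (by omega)]
      rw [Function.iterate_succ_apply', pow_succ, mul_assoc, h2, he]

theorem stmt_11 (z n : ℕ) (hz : 0 < z) (hn : 1 ≤ n) (hcyc : collatzT^[n] z = z)
    (k : ℕ) (hk : k = ((Finset.range n).filter fun i => collatzT^[i] z % 2 = 1).card) :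
    3 ^ k < 2 ^ n ∧
    0 < z * (2 ^ n - 3 ^ k) ∧
    (∃ e : Fin k → ℕ,
      z * (2 ^ n - 3 ^ k) = ∑ j : Fin k, 3 ^ (k - 1 - (j : ℕ)) * 2 ^ e j) ∧
    k < n := by
  obtain ⟨e, he⟩ := collatz_key z n k hk
  rw [hcyc] at he
  set S := ∑ j : Fin k, 3 ^ (k - 1 - (j : ℕ)) * 2 ^ e j with hS
  have hkpos : 0 < k := by
    rcases Nat.eq_zero_or_pos k with h | h
    · subst h
      simp [hS] at he
      have h2 : 2 ≤ 2 ^ n := by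
        calc 2 = 2 ^ 1 := by norm_num
        _ ≤ 2 ^ n := Nat.pow_le_pow_right (by norm_num) hn
      nlinarith
    · exact h
  have hSpos : 0 < S := by
    rw [hS]
    apply Finset.sum_pos
    · intro i _
      positivity
    · exact ⟨⟨0, hkpos⟩, Finset.mem_univ _⟩
  have hlt : 3 ^ k < 2 ^ n := by
    have : 3 ^ k * z < 2 ^ n * z := by omega
    exact Nat.lt_of_mul_lt_mul_right this
  have heq : z * (2 ^ n - 3 ^ k) = S := by
    have h1 : z * (2 ^ n - 3 ^ k) = z * 2 ^ n - z * 3 ^ k := by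
      rw [Nat.mul_sub]
    rw [h1, mul_comm z (2 ^ n), mul_comm z (3 ^ k)]
    omega
  have hkn : k < n := by
    have : 2 ^ k < 2 ^ n :=
      lt_of_le_of_lt (Nat.pow_le_pow_left (by norm_num) k) hlt
    exact (Nat.pow_lt_pow_iff_right (by norm_num)).mp this
  exact ⟨hlt, heq ▸ hSpos, ⟨e, heq⟩, hkn⟩
end

section
/- Over the 2-adic integers ℤ₂, the parity vector map Q : ℤ₂ → {0,1}^ℕ, sending z to (T^i(z) mod 2)_{i∈ℕ}, is a bijection, where T is extended to ℤ₂ by T(z) = z/2 if z ≡ 0 (mod 2) and T(z) = (3z+1)/2 if z ≡ 1 (mod 2). -/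
namespace Stmt14

open PadicInt

lemma two_cast : ((2 : ℕ) : ℤ_[2]) = 2 := by norm_cast

lemma parity_eq_zero_iff (z : ℤ_[2]) :
    PadicInt.toZMod z = 0 ↔ (2 : ℤ_[2]) ∣ z := by
  rw [← RingHom.mem_ker, PadicInt.ker_toZMod, PadicInt.maximalIdeal_eq_span_p,
    Ideal.mem_span_singleton, two_cast]

lemma dvd_iff_norm (n : ℕ) (x : ℤ_[2]) :
    (2 : ℤ_[2]) ^ n ∣ x ↔ ‖x‖ ≤ (2 : ℝ) ^ (-n : ℤ) := by
  rw [show ((2:ℝ)) = ((2:ℕ):ℝ) by norm_num,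
    PadicInt.norm_le_pow_iff_mem_span_pow, Ideal.mem_span_singleton, two_cast]

lemma two_ne_zero' : (2 : ℤ_[2]) ≠ 0 := by
  intro h
  have := congrArg (‖·‖) h
  simp only [norm_zero] at this
  rw [show (2 : ℤ_[2]) = ((2:ℕ) : ℤ_[2]) from two_cast.symm, PadicInt.norm_p] at this
  norm_num at this

lemma three_unit : IsUnit (3 : ℤ_[2]) := by
  rw [PadicInt.isUnit_iff]
  by_contra h
  have hlt : ‖(3 : ℤ_[2])‖ < 1 := lt_of_le_of_ne (PadicInt.norm_le_one _) h
  rw [show (3 : ℤ_[2]) = ((3:ℤ) : ℤ_[2]) by norm_cast,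
    show (1:ℝ) = ((2:ℕ):ℝ) ^ (-(1:ℕ) + 1 : ℤ) by norm_num] at hlt
  rw [← PadicInt.norm_le_pow_iff_norm_lt_pow_add_one,
    PadicInt.norm_le_pow_iff_mem_span_pow, Ideal.mem_span_singleton, pow_one, two_cast,
    show ((3:ℤ) : ℤ_[2]) = ((3:ℕ) : ℤ_[2]) by norm_cast] at hlt
  have := (PadicInt.pow_p_dvd_int_iff (p := 2) 1 3).mp (by simpa [two_cast] using hlt)
  norm_num at this

lemma parity_congr {z w : ℤ_[2]} (h : (2 : ℤ_[2]) ∣ z - w) :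
    PadicInt.toZMod z = PadicInt.toZMod w := by
  have : PadicInt.toZMod (z - w) = 0 := (parity_eq_zero_iff _).mpr h
  rwa [map_sub, sub_eq_zero] at this

section T

variable (T : ℤ_[2] → ℤ_[2])
    (hT : ∀ z : ℤ_[2],
      (PadicInt.toZMod z = 0 → 2 * T z = z) ∧
      (PadicInt.toZMod z ≠ 0 → 2 * T z = 3 * z + 1))

include hT

lemma two_mul_step (z w : ℤ_[2]) (hp : PadicInt.toZMod z = PadicInt.toZMod w) :
    2 * (T z - T w) = z - w ∨ 2 * (T z - T w) = 3 * (z - w) := by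
  by_cases h0 : PadicInt.toZMod z = 0
  · left
    rw [mul_sub, (hT z).1 h0, (hT w).1 (hp ▸ h0)]
  · right
    rw [mul_sub, (hT z).2 h0, (hT w).2 (fun hw => h0 (hp ▸ hw))]
    ring

lemma stepA (n : ℕ) (z w : ℤ_[2]) (h : (2 : ℤ_[2]) ^ (n + 1) ∣ z - w) :
    (2 : ℤ_[2]) ^ n ∣ T z - T w := by
  have hp : PadicInt.toZMod z = PadicInt.toZMod w :=
    parity_congr (dvd_trans (dvd_pow_self 2 (Nat.succ_ne_zero n)) h)
  have key := two_mul_step T hT z w hp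
  have h2 : (2 : ℤ_[2]) ^ (n + 1) ∣ 2 * (T z - T w) := by
    rcases key with hk | hk
    · rw [hk]; exact h
    · rw [hk]; exact Dvd.dvd.mul_left h 3
  rw [pow_succ'] at h2
  exact (mul_dvd_mul_iff_left two_ne_zero').mp h2

lemma prefix_congr : ∀ (n : ℕ) (z w : ℤ_[2]), (2 : ℤ_[2]) ^ n ∣ z - w →
    ∀ i < n, PadicInt.toZMod (T^[i] z) = PadicInt.toZMod (T^[i] w) := by
  intro n
  induction n with
  | zero => intro z w _ i hi; omega
  | succ n ih =>
    intro z w h i hi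
    cases i with
    | zero =>
      simpa using parity_congr (dvd_trans (dvd_pow_self 2 (Nat.succ_ne_zero n)) h)
    | succ j =>
      rw [Function.iterate_succ_apply, Function.iterate_succ_apply]
      exact ih (T z) (T w) (stepA T hT n z w h) j (by omega)

lemma dvd_of_prefix : ∀ (n : ℕ) (z w : ℤ_[2]),
    (∀ i < n, PadicInt.toZMod (T^[i] z) = PadicInt.toZMod (T^[i] w)) →
    (2 : ℤ_[2]) ^ n ∣ z - w := by
  intro n
  induction n with
  | zero => intro z w _; simp
  | succ n ih =>
    intro z w h
    have h0 : PadicInt.toZMod z = PadicInt.toZMod w := by simpa using h 0 (by omega)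
    have hTzw : (2 : ℤ_[2]) ^ n ∣ T z - T w := by
      refine ih (T z) (T w) (fun i hi => ?_)
      have := h (i + 1) (by omega)
      rwa [Function.iterate_succ_apply, Function.iterate_succ_apply] at this
    have h2 : (2 : ℤ_[2]) ^ (n + 1) ∣ 2 * (T z - T w) := by
      rw [pow_succ']
      exact mul_dvd_mul_left 2 hTzw
    rcases two_mul_step T hT z w h0 with hk | hk
    · rwa [hk] at h2
    · rw [hk] at h2
      exact (three_unit.dvd_mul_left).mp h2

end T

noncomputable def approx (T : ℤ_[2] → ℤ_[2]) (a : ℕ → ZMod 2) : ℕ → ℤ_[2]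
  | 0 => 0
  | n + 1 =>
    if PadicInt.toZMod (T^[n] (approx T a n)) = a n then approx T a n
    else approx T a n + 2 ^ n

section approx

variable (T : ℤ_[2] → ℤ_[2])
    (hT : ∀ z : ℤ_[2],
      (PadicInt.toZMod z = 0 → 2 * T z = z) ∧
      (PadicInt.toZMod z ≠ 0 → 2 * T z = 3 * z + 1))
    (a : ℕ → ZMod 2)

lemma approx_step_dvd (n : ℕ) : (2 : ℤ_[2]) ^ n ∣ approx T a (n + 1) - approx T a n := by
  rw [approx]
  split
  · simp
  · simp

include hT

lemma approx_spec : ∀ n, ∀ i < n, PadicInt.toZMod (T^[i] (approx T a n)) = a i := by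
  intro n
  induction n with
  | zero => intro i hi; omega
  | succ n ih =>
    intro i hi
    have hpre : ∀ j < n,
        PadicInt.toZMod (T^[j] (approx T a (n+1))) = PadicInt.toZMod (T^[j] (approx T a n)) :=
      fun j hj => prefix_congr T hT n _ _ (approx_step_dvd T a n) j hj
    rcases Nat.lt_or_ge i n with hin | hin
    · rw [hpre i hin]; exact ih i hin
    · have hi_eq : n = i := by omega
      subst hi_eq
      rw [approx]
      split
      · assumption
      · rename_i hne
        -- show parity at index n differs for approx n + 2^n vs approx n
        have hdiff : PadicInt.toZMod (T^[n] (approx T a n + 2 ^ n)) ≠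
            PadicInt.toZMod (T^[n] (approx T a n)) := by
          intro heq
          have hall : ∀ j < n + 1, PadicInt.toZMod (T^[j] (approx T a n + 2 ^ n)) =
              PadicInt.toZMod (T^[j] (approx T a n)) := by
            intro j hj
            rcases Nat.lt_or_ge j n with hjn | hjn
            · exact prefix_congr T hT n _ _ (by simp) j hjn
            · have : j = n := by omega
              subst this; exact heq
          have hdvd := dvd_of_prefix T hT (n+1) _ _ hall
          rw [add_sub_cancel_left] at hdvd
          have hnorm := (dvd_iff_norm (n+1) _).mp hdvd
          rw [show ((2:ℤ_[2])^n) = ((2:ℕ):ℤ_[2])^n by rw [two_cast], PadicInt.norm_p_pow] at hnorm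
          have : ((2:ℕ):ℝ) ^ (-(n:ℤ)) ≤ (2:ℝ) ^ (-(n+1:ℕ):ℤ) := hnorm
          rw [show (((2:ℕ)):ℝ) = (2:ℝ) by norm_num] at this
          have hlt : (2:ℝ) ^ (-(n+1:ℕ):ℤ) < (2:ℝ) ^ (-(n:ℤ)) := by
            apply zpow_lt_zpow_right₀ (by norm_num)
            omega
          linarith
        have hkey : ∀ x y b : ZMod 2, x ≠ y → y ≠ b → x = b := by decide
        exact hkey _ _ _ hdiff hne

lemma approx_dvd_of_le : ∀ m n, n ≤ m → (2 : ℤ_[2]) ^ n ∣ approx T a m - approx T a n := by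
  intro m
  induction m with
  | zero =>
    intro n hn
    obtain rfl : n = 0 := Nat.le_zero.mp hn
    simp
  | succ m ih =>
    intro n hn
    rcases Nat.lt_or_ge n (m + 1) with h | h
    · have hnm : n ≤ m := by omega
      have h1 : (2 : ℤ_[2]) ^ n ∣ approx T a (m+1) - approx T a m :=
        dvd_trans (pow_dvd_pow 2 hnm) (approx_step_dvd T a m)
      have h2 := ih n hnm
      have : approx T a (m+1) - approx T a n =
          (approx T a (m+1) - approx T a m) + (approx T a m - approx T a n) := by ring
      rw [this]
      exact dvd_add h1 h2
    · have : n = m + 1 := by omega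
      subst this; simp

end approx

end Stmt14

/-- The parity-vector map of a Collatz-like map `T` on the 2-adic integers is a
bijection, where `T` is characterised by `2 * T z = z` for even `z` and
`2 * T z = 3 z + 1` for odd `z`. -/
theorem stmt_14 (T : ℤ_[2] → ℤ_[2])
    (hT : ∀ z : ℤ_[2],
      (PadicInt.toZMod z = 0 → 2 * T z = z) ∧
      (PadicInt.toZMod z ≠ 0 → 2 * T z = 3 * z + 1)) :
    Function.Bijective
      (fun z : ℤ_[2] => fun i : ℕ => PadicInt.toZMod (T^[i] z)) := by
  constructor
  · -- injective
    intro z w h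
    have hall : ∀ i : ℕ, PadicInt.toZMod (T^[i] z) = PadicInt.toZMod (T^[i] w) :=
      fun i => congrFun h i
    have hdvd : ∀ n : ℕ, (2 : ℤ_[2]) ^ n ∣ z - w :=
      fun n => Stmt14.dvd_of_prefix T hT n z w (fun i _ => hall i)
    by_contra hne
    have hzw : z - w ≠ 0 := sub_ne_zero_of_ne hne
    have hpos : 0 < ‖z - w‖ := by
      simpa [norm_pos_iff] using hzw
    obtain ⟨k, hk⟩ := PadicInt.exists_pow_neg_lt 2 hpos
    have := (Stmt14.dvd_iff_norm k (z - w)).mp (hdvd k)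
    rw [show ((2:ℝ)) = ((2:ℕ):ℝ) by norm_num] at this
    linarith
  · -- surjective
    intro a
    set f := Stmt14.approx T a with hf
    have hc : CauchySeq f := by
      rw [Metric.cauchySeq_iff']
      intro ε hε
      obtain ⟨k, hk⟩ := PadicInt.exists_pow_neg_lt 2 hε
      refine ⟨k, fun n hn => ?_⟩
      have hd := Stmt14.approx_dvd_of_le T hT a n k hn
      have := (Stmt14.dvd_iff_norm k _).mp hd
      rw [dist_eq_norm]
      calc ‖f n - f k‖ ≤ (2:ℝ) ^ (-k:ℤ) := this
        _ < ε := by rw [show ((2:ℝ)) = ((2:ℕ):ℝ) by norm_num]; exact hk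
    obtain ⟨z, hz⟩ := cauchySeq_tendsto_of_complete hc
    have hlim : ∀ n : ℕ, (2 : ℤ_[2]) ^ n ∣ z - f n := by
      intro n
      rw [Stmt14.dvd_iff_norm]
      have htend : Filter.Tendsto (fun m => ‖f m - f n‖) Filter.atTop
          (nhds ‖z - f n‖) := ((hz.sub tendsto_const_nhds).norm)
      refine le_of_tendsto htend ?_
      filter_upwards [Filter.eventually_ge_atTop n] with m hm
      exact (Stmt14.dvd_iff_norm n _).mp (Stmt14.approx_dvd_of_le T hT a m n hm)
    refine ⟨z, ?_⟩
    funext i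
    show PadicInt.toZMod (T^[i] z) = a i
    have h1 : PadicInt.toZMod (T^[i] z) = PadicInt.toZMod (T^[i] (f (i+1))) :=
      Stmt14.prefix_congr T hT (i+1) z (f (i+1)) (hlim (i+1)) i (by omega)
    rw [h1]
    exact Stmt14.approx_spec T hT a (i+1) i (by omega)
end

section
/- For every eventually periodic parity vector p ∈ {0,1}^ℕ (i.e., p = u v v v … for finite words u, v), the unique 2-adic integer z with Q(z) = p is rational, i.e., lies in ℤ₂ ∩ ℚ. -/
lemma norm_three : ‖(3 : ℤ_[2])‖ = 1 := by
  have h1 : ‖((3 : ℤ) : ℤ_[2])‖ ≤ 1 := PadicInt.norm_le_one _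
  have h2 : ¬ ‖((3 : ℤ) : ℤ_[2])‖ < 1 := by
    rw [PadicInt.norm_int_lt_one_iff_dvd]; decide
  push_cast at h1 h2
  linarith [lt_or_eq_of_le h1]

lemma norm_two : ‖(2 : ℤ_[2])‖ = 2⁻¹ := by
  have := @PadicInt.norm_p 2 _
  norm_num at this ⊢
  exact this

lemma inj_aux (T : ℤ_[2] → ℤ_[2])
    (hT : ∀ z : ℤ_[2],
      (PadicInt.toZMod z = 0 → 2 * T z = z) ∧
      (PadicInt.toZMod z ≠ 0 → 2 * T z = 3 * z + 1)) :
    ∀ n : ℕ, ∀ x y : ℤ_[2],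
      (∀ i, PadicInt.toZMod (T^[i] x) = PadicInt.toZMod (T^[i] y)) →
      ‖x - y‖ ≤ (2 : ℝ)⁻¹ ^ n := by
  intro n
  induction n with
  | zero => intro x y _; simpa using PadicInt.norm_le_one _
  | succ n ih =>
    intro x y h
    have h0 : PadicInt.toZMod x = PadicInt.toZMod y := by simpa using h 0
    have hnext : ∀ i, PadicInt.toZMod (T^[i] (T x)) = PadicInt.toZMod (T^[i] (T y)) := by
      intro i
      have := h (i + 1)
      simpa [Function.iterate_succ_apply] using this
    have hih := ih (T x) (T y) hnext
    have key : 2 * (T x - T y) = (if PadicInt.toZMod x = 0 then 1 else 3) * (x - y) := by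
      by_cases hx : PadicInt.toZMod x = 0
      · have hy : PadicInt.toZMod y = 0 := h0 ▸ hx
        have e1 := (hT x).1 hx
        have e2 := (hT y).1 hy
        simp only [hx, if_true, one_mul]; rw [mul_sub, e1, e2]
      · have hy : PadicInt.toZMod y ≠ 0 := h0 ▸ hx
        have e1 := (hT x).2 hx
        have e2 := (hT y).2 hy
        simp [hx]
        calc 2 * (T x - T y) = 2 * T x - 2 * T y := by ring
        _ = (3 * x + 1) - (3 * y + 1) := by rw [e1, e2]
        _ = 3 * (x - y) := by ring
    have hnorm : ‖(if PadicInt.toZMod x = 0 then (1:ℤ_[2]) else 3)‖ = 1 := by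
      split <;> simp [norm_three]
    have : ‖x - y‖ = 2⁻¹ * ‖T x - T y‖ := by
      have := congrArg norm key
      rw [norm_mul, norm_mul, hnorm, one_mul, norm_two] at this
      linarith
    rw [this, pow_succ, mul_comm ((2:ℝ)⁻¹ ^ n)]
    exact mul_le_mul_of_nonneg_left hih (by norm_num)

lemma Q_inj (T : ℤ_[2] → ℤ_[2])
    (hT : ∀ z : ℤ_[2],
      (PadicInt.toZMod z = 0 → 2 * T z = z) ∧
      (PadicInt.toZMod z ≠ 0 → 2 * T z = 3 * z + 1))
    (x y : ℤ_[2])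
    (h : ∀ i, PadicInt.toZMod (T^[i] x) = PadicInt.toZMod (T^[i] y)) : x = y := by
  have hlim : Filter.Tendsto (fun n : ℕ => (2 : ℝ)⁻¹ ^ n) Filter.atTop (nhds 0) := by
    apply tendsto_pow_atTop_nhds_zero_of_lt_one <;> norm_num
  have : ‖x - y‖ ≤ 0 := ge_of_tendsto' hlim (fun n => inj_aux T hT n x y h)
  have : ‖x - y‖ = 0 := le_antisymm this (norm_nonneg _)
  rwa [norm_eq_zero, sub_eq_zero] at this

lemma affine (T : ℤ_[2] → ℤ_[2])
    (hT : ∀ z : ℤ_[2],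
      (PadicInt.toZMod z = 0 → 2 * T z = z) ∧
      (PadicInt.toZMod z ≠ 0 → 2 * T z = 3 * z + 1)) (z : ℤ_[2]) :
    ∀ n : ℕ, ∃ (m : ℕ) (B : ℤ), (2 : ℤ_[2]) ^ n * T^[n] z = 3 ^ m * z + B := by
  intro n
  induction n with
  | zero => exact ⟨0, 0, by simp⟩
  | succ n ih =>
    obtain ⟨m, B, hmB⟩ := ih
    by_cases hx : PadicInt.toZMod (T^[n] z) = 0
    · refine ⟨m, B, ?_⟩
      have e := (hT (T^[n] z)).1 hx
      rw [Function.iterate_succ_apply', pow_succ]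
      calc (2:ℤ_[2]) ^ n * 2 * T (T^[n] z) = (2:ℤ_[2]) ^ n * (2 * T (T^[n] z)) := by ring
      _ = (2:ℤ_[2]) ^ n * T^[n] z := by rw [e]
      _ = 3 ^ m * z + B := hmB
    · refine ⟨m + 1, 3 * B + 2 ^ n, ?_⟩
      have e := (hT (T^[n] z)).2 hx
      rw [Function.iterate_succ_apply', pow_succ]
      push_cast
      calc (2:ℤ_[2]) ^ n * 2 * T (T^[n] z) = (2:ℤ_[2]) ^ n * (2 * T (T^[n] z)) := by ring
      _ = (2:ℤ_[2]) ^ n * (3 * T^[n] z + 1) := by rw [e]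
      _ = 3 * ((2:ℤ_[2]) ^ n * T^[n] z) + 2 ^ n := by ring
      _ = 3 * ((3:ℤ_[2]) ^ m * z + B) + 2 ^ n := by rw [hmB]
      _ = 3 ^ (m + 1) * z + (3 * B + 2 ^ n) := by ring

/-- Any 2-adic integer whose Collatz parity vector is eventually periodic is a
rational number. -/
theorem stmt_15 (T : ℤ_[2] → ℤ_[2])
    (hT : ∀ z : ℤ_[2],
      (PadicInt.toZMod z = 0 → 2 * T z = z) ∧
      (PadicInt.toZMod z ≠ 0 → 2 * T z = 3 * z + 1))
    (p : ℕ → ZMod 2) (N K : ℕ) (hK : 1 ≤ K) (hp : ∀ i, N ≤ i → p (i + K) = p i)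
    (z : ℤ_[2]) (hz : ∀ i : ℕ, PadicInt.toZMod (T^[i] z) = p i) :
    ∃ r : ℚ, (r : ℚ_[2]) = (z : ℚ_[2]) := by
  set w : ℤ_[2] := T^[N] z with hw
  have hfix : T^[K] w = w := by
    apply Q_inj T hT
    intro i
    have l1 : T^[i] (T^[K] w) = T^[i + K + N] z := by
      rw [hw, ← Function.iterate_add_apply, ← Function.iterate_add_apply]
    have l2 : T^[i] w = T^[i + N] z := by
      rw [hw, ← Function.iterate_add_apply]
    rw [l1, l2, hz, hz]
    have h1 : i + K + N = (i + N) + K := by omega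
    rw [h1, hp (i + N) (Nat.le_add_left N i)]
  obtain ⟨m, B, heq1⟩ := affine T hT w K
  obtain ⟨m', B', heq2⟩ := affine T hT z N
  rw [hfix] at heq1
  -- denominator nonzero
  have hd : (2 : ℤ) ^ K - 3 ^ m ≠ 0 := by
    intro h
    have h2 : (2 : ℤ) ^ K = 3 ^ m := by linarith
    have he : (2 : ℤ) ∣ 3 ^ m := h2 ▸ dvd_pow_self 2 (by omega : K ≠ 0)
    have := Int.prime_two.dvd_of_dvd_pow he
    norm_num at this
  -- move to ℚ_[2]
  have c2 : ((2 : ℤ_[2]) : ℚ_[2]) = 2 := by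
    rw [show (2 : ℤ_[2]) = ((2 : ℕ) : ℤ_[2]) by norm_num, PadicInt.coe_natCast]; norm_num
  have c3 : ((3 : ℤ_[2]) : ℚ_[2]) = 3 := by
    rw [show (3 : ℤ_[2]) = ((3 : ℕ) : ℤ_[2]) by norm_num, PadicInt.coe_natCast]; norm_num
  have eq1 : ((2 : ℚ_[2]) ^ K - 3 ^ m) * (w : ℚ_[2]) = (B : ℚ_[2]) := by
    have := congrArg (fun t : ℤ_[2] => (t : ℚ_[2])) heq1
    push_cast at this
    rw [c2, c3] at this
    linear_combination this
  have eq2 : (2 : ℚ_[2]) ^ N * (w : ℚ_[2]) = 3 ^ m' * (z : ℚ_[2]) + (B' : ℚ_[2]) := by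
    have := congrArg (fun t : ℤ_[2] => (t : ℚ_[2])) heq2
    push_cast at this
    rw [c2, c3] at this
    exact this
  refine ⟨((2 : ℚ) ^ N * B - B' * ((2 : ℚ) ^ K - 3 ^ m)) / (3 ^ m' * ((2 : ℚ) ^ K - 3 ^ m)), ?_⟩
  have hden : (3 : ℚ) ^ m' * ((2 : ℚ) ^ K - 3 ^ m) ≠ 0 := by
    refine mul_ne_zero (pow_ne_zero _ (by norm_num)) (fun h => hd ?_)
    exact_mod_cast h
  rw [Padic.coe_div]
  push_cast
  rw [div_eq_iff]
  · linear_combination ((2 : ℚ_[2]) ^ K - 3 ^ m) * eq2 - (2 : ℚ_[2]) ^ N * eq1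
  · intro h
    apply hden
    have h0 : (((3 : ℚ) ^ m' * ((2 : ℚ) ^ K - 3 ^ m) : ℚ) : ℚ_[2]) = 0 := by
      push_cast
      linear_combination h
    exact_mod_cast h0
end

section
/- For any finite parity vector p ∈ {0,1}^n with n ≥ 1, there exists a rational number z = a/(2^n − 3^k) (where k = Σ p_i is the number of ones in p and a ∈ ℤ) such that, extending T to rationals with odd denominator, T^n(z) = z and T^i(z) ≡ p_i (mod 2) for all i < n; provided 2^n ≠ 3^k. -/
/-- The Collatz map on rationals (with odd denominator): parity is the parity
of the numerator in lowest terms. -/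
def collatzTQ (q : ℚ) : ℚ := if q.num % 2 = 0 then q / 2 else (3 * q + 1) / 2

/-- periodic extension of the parity vector -/
def collatzPf (n : ℕ) (p : Fin n → Fin 2) (m : ℕ) : ℕ :=
  if h : n = 0 then 0 else (p ⟨m % n, Nat.mod_lt m (Nat.pos_of_ne_zero h)⟩ : ℕ)

/-- partial sums of the periodic parity sequence -/
def collatzSf (n : ℕ) (p : Fin n → Fin 2) (u v : ℕ) : ℕ :=
  ∑ m ∈ Finset.Ico u v, collatzPf n p m

/-- the integer numerators -/
def collatzA (n : ℕ) (p : Fin n → Fin 2) (i : ℕ) : ℤ :=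
  ∑ j ∈ Finset.range n,
    3 ^ (collatzSf n p (i + j + 1) (i + n)) * 2 ^ j * (collatzPf n p (i + j) : ℤ)

lemma collatzPf_le (n : ℕ) (p : Fin n → Fin 2) (m : ℕ) : collatzPf n p m ≤ 1 := by
  unfold collatzPf
  split
  · omega
  · exact Nat.lt_succ_iff.mp (p _).isLt

lemma collatzPf_add_n (n : ℕ) (p : Fin n → Fin 2) (m : ℕ) :
    collatzPf n p (m + n) = collatzPf n p m := by
  unfold collatzPf
  split
  · rfl
  · simp [Nat.add_mod_right]

lemma collatzSf_shift (n : ℕ) (p : Fin n → Fin 2) (u v : ℕ) :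
    collatzSf n p (u + n) (v + n) = collatzSf n p u v := by
  unfold collatzSf
  rw [Finset.sum_Ico_eq_sum_range, Finset.sum_Ico_eq_sum_range]
  have hlen : v + n - (u + n) = v - u := by omega
  rw [hlen]
  refine Finset.sum_congr rfl fun m _ => ?_
  have : u + n + m = (u + m) + n := by ring
  rw [this, collatzPf_add_n]

lemma collatzSf_window (n : ℕ) (p : Fin n → Fin 2) (i : ℕ) :
    collatzSf n p i (i + n) = collatzSf n p 0 n := by
  induction i with
  | zero => simp
  | succ i ih =>
    have h1 : collatzSf n p i (i + n + 1) = collatzSf n p i (i + n) + collatzPf n p (i + n) :=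
      Finset.sum_Ico_succ_top (by omega) _
    have h2 : collatzSf n p i (i + n + 1) =
        collatzPf n p i + collatzSf n p (i + 1) (i + n + 1) :=
      Finset.sum_eq_sum_Ico_succ_bot (by omega) _
    have h3 : collatzPf n p (i + n) = collatzPf n p i := collatzPf_add_n n p i
    have : collatzSf n p (i + 1) (i + 1 + n) = collatzSf n p (i + 1) (i + n + 1) := by
      congr 1; omega
    omega

lemma collatzA_rec (n : ℕ) (hn : 1 ≤ n) (p : Fin n → Fin 2) (i : ℕ) :
    2 * collatzA n p (i + 1) =
      3 ^ (collatzPf n p i) * collatzA n p i +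
        (collatzPf n p i : ℤ) * (2 ^ n - 3 ^ (collatzSf n p 0 n)) := by
  obtain ⟨m, rfl⟩ : ∃ m, n = m + 1 := ⟨n - 1, by omega⟩
  unfold collatzA
  rw [Finset.mul_sum, Finset.mul_sum, Finset.sum_range_succ, Finset.sum_range_succ']
  have hsum : ∀ j ∈ Finset.range m,
      2 * (3 ^ collatzSf (m+1) p (i + 1 + j + 1) (i + 1 + (m+1)) * 2 ^ j *
            (collatzPf (m+1) p (i + 1 + j) : ℤ))
      = 3 ^ collatzPf (m+1) p i *
          (3 ^ collatzSf (m+1) p (i + (j + 1) + 1) (i + (m+1)) * 2 ^ (j + 1) *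
            (collatzPf (m+1) p (i + (j + 1)) : ℤ)) := by
    intro j hj
    simp only [Finset.mem_range] at hj
    have ha : i + 1 + j = i + (j + 1) := by omega
    have hb : i + 1 + (m + 1) = i + (m + 1) + 1 := by omega
    rw [ha, hb]
    have hsplit : collatzSf (m+1) p (i + (j + 1) + 1) (i + (m + 1) + 1) =
        collatzSf (m+1) p (i + (j + 1) + 1) (i + (m + 1)) + collatzPf (m+1) p (i + (m + 1)) :=
      Finset.sum_Ico_succ_top (by omega) _
    rw [hsplit, collatzPf_add_n, pow_add]
    ring
  rw [Finset.sum_congr rfl hsum]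
  have hlast : collatzSf (m+1) p (i + 1 + m + 1) (i + 1 + (m+1)) = 0 := by
    unfold collatzSf
    have : i + 1 + m + 1 = i + 1 + (m + 1) := by omega
    rw [this, Finset.Ico_self, Finset.sum_empty]
  have hPlast : collatzPf (m+1) p (i + 1 + m) = collatzPf (m+1) p i := by
    have : i + 1 + m = i + (m + 1) := by omega
    rw [this, collatzPf_add_n]
  rw [hlast, hPlast]
  have hfirst : collatzPf (m+1) p i + collatzSf (m+1) p (i + 0 + 1) (i + (m+1)) =
      collatzSf (m+1) p 0 (m+1) := by
    have h2 : collatzSf (m+1) p i (i + (m+1)) =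
        collatzPf (m+1) p i + collatzSf (m+1) p (i + 1) (i + (m+1)) :=
      Finset.sum_eq_sum_Ico_succ_bot (by omega) _
    have h3 := collatzSf_window (m+1) p i
    simp only [Nat.add_zero] at *
    omega
  have hpow : (3 : ℤ) ^ collatzPf (m+1) p i * 3 ^ collatzSf (m+1) p (i + 0 + 1) (i + (m+1))
      = 3 ^ collatzSf (m+1) p 0 (m+1) := by
    rw [← pow_add, hfirst]
  simp only [pow_zero, one_mul, mul_one, Nat.add_zero] at hpow ⊢
  have hb : 2 * (2 ^ m * (collatzPf (m+1) p i : ℤ)) =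
      3 ^ collatzPf (m+1) p i *
        (3 ^ collatzSf (m+1) p (i + 1) (i + (m+1)) * (collatzPf (m+1) p i : ℤ)) +
      (collatzPf (m+1) p i : ℤ) * (2 ^ (m+1) - 3 ^ collatzSf (m+1) p 0 (m+1)) := by
    rw [← hpow]; ring
  linarith [hb]

lemma collatzA_periodic (n : ℕ) (p : Fin n → Fin 2) :
    collatzA n p n = collatzA n p 0 := by
  unfold collatzA
  refine Finset.sum_congr rfl fun j hj => ?_
  simp only [Nat.zero_add]
  have e1 : n + j = j + n := by omega
  rw [e1, collatzPf_add_n]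
  have e2 : j + n + 1 = (j + 1) + n := by omega
  rw [e2, collatzSf_shift]

/-- parity of numerator of a/D for odd D -/
lemma collatz_num_parity (a D : ℤ) (hD : D % 2 = 1) (h0 : D ≠ 0) :
    ((a : ℚ) / (D : ℚ)).num % 2 = a % 2 := by
  set q : ℚ := (a : ℚ) / (D : ℚ) with hq
  have hDQ : (D : ℚ) ≠ 0 := Int.cast_ne_zero.mpr h0
  have hqD : q * D = a := by
    rw [hq]; field_simp
  have hden : ((q.den : ℤ)) ∣ D := by
    have heq : q = Rat.divInt a D := by rw [hq, Rat.divInt_eq_div]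
    rw [heq]
    exact Rat.den_dvd a D
  have hdenodd : (q.den : ℤ) % 2 = 1 := by
    rcases Int.emod_two_eq_zero_or_one (q.den : ℤ) with h2 | h2
    · exfalso
      obtain ⟨c, hc⟩ := hden
      have : (2 : ℤ) ∣ (q.den : ℤ) := Int.dvd_of_emod_eq_zero h2
      obtain ⟨d, hd⟩ := this
      have : D = 2 * (d * c) := by rw [hc, hd]; ring
      omega
    · exact h2
  have hZ : q.num * D = a * q.den := by
    have h1 : (q.num : ℚ) * D = a * q.den := by
      have hd0 : (q.den : ℚ) ≠ 0 := by exact_mod_cast q.den_ne_zero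
      have := hqD
      rw [← Rat.num_div_den q] at this
      field_simp at this
      linear_combination this
    exact_mod_cast h1
  -- now mod 2
  have m1 : q.num ≡ q.num * D [ZMOD 2] := by
    have : D ≡ 1 [ZMOD 2] := by unfold Int.ModEq; omega
    calc q.num = q.num * 1 := by ring
      _ ≡ q.num * D [ZMOD 2] := (Int.ModEq.mul_left q.num this).symm
  have m2 : a * q.den ≡ a [ZMOD 2] := by
    have : (q.den : ℤ) ≡ 1 [ZMOD 2] := by unfold Int.ModEq; omega
    calc a * q.den ≡ a * 1 [ZMOD 2] := Int.ModEq.mul_left a this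
      _ = a := by ring
  have := (m1.trans (hZ ▸ Int.ModEq.refl _)).trans m2
  exact this

theorem stmt_16 (n : ℕ) (hn : 1 ≤ n) (p : Fin n → Fin 2)
    (k : ℕ) (hk : k = ∑ i, (p i : ℕ)) (h : (2 : ℤ) ^ n ≠ 3 ^ k) :
    ∃ a : ℤ, ∃ z : ℚ,
      z = (a : ℚ) / ((2 : ℚ) ^ n - (3 : ℚ) ^ k) ∧
      collatzTQ^[n] z = z ∧
      ∀ i : Fin n, (collatzTQ^[(i : ℕ)] z).num % 2 = (p i : ℤ) := by
  have hn0 : n ≠ 0 := by omega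
  -- k is the window sum
  have hkS : collatzSf n p 0 n = k := by
    rw [hk]
    unfold collatzSf
    rw [Finset.sum_Ico_eq_sum_range]
    simp only [Nat.sub_zero, Nat.zero_add]
    rw [← Fin.sum_univ_eq_sum_range (fun j => collatzPf n p j) n]
    refine Finset.sum_congr rfl fun j _ => ?_
    unfold collatzPf
    rw [dif_neg hn0]
    have he : (⟨(j : ℕ) % n, Nat.mod_lt _ (Nat.pos_of_ne_zero hn0)⟩ : Fin n) = j :=
      Fin.ext (Nat.mod_eq_of_lt j.isLt)
    rw [he]
  set DZ : ℤ := 2 ^ n - 3 ^ k with hDZ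
  have hDZ0 : DZ ≠ 0 := sub_ne_zero.mpr h
  have h2n : (2 : ℤ) ^ n % 2 = 0 := by
    obtain ⟨m, rfl⟩ : ∃ m, n = m + 1 := ⟨n - 1, by omega⟩
    rw [pow_succ]
    omega
  have h3k : (3 : ℤ) ^ k % 2 = 1 := by
    have : Odd ((3 : ℤ) ^ k) := Odd.pow (by decide)
    obtain ⟨c, hc⟩ := this
    omega
  have hDodd : DZ % 2 = 1 := by rw [hDZ]; omega
  -- the rational orbit
  set z : ℕ → ℚ := fun i => (collatzA n p i : ℚ) / (DZ : ℚ) with hz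
  have hDQ : (DZ : ℚ) ≠ 0 := Int.cast_ne_zero.mpr hDZ0
  have hrecQ : ∀ i, 2 * z (i + 1) = 3 ^ (collatzPf n p i) * z i + (collatzPf n p i : ℚ) := by
    intro i
    have hr := collatzA_rec n hn p i
    rw [hkS] at hr
    have hrQ := congrArg (fun x : ℤ => (x : ℚ)) hr
    push_cast at hrQ
    simp only [hz]
    field_simp
    rw [hDZ]
    push_cast
    linear_combination hrQ
  -- parity of the integers
  have hparA : ∀ i, collatzA n p i % 2 = (collatzPf n p i : ℤ) := by
    intro i
    have hr := collatzA_rec n hn p i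
    rw [hkS] at hr
    have hle := collatzPf_le n p i
    rcases Nat.le_one_iff_eq_zero_or_eq_one.mp hle with hPf | hPf
    · rw [hPf] at hr ⊢
      simp only [pow_zero, one_mul, Nat.cast_zero, zero_mul, add_zero] at hr
      omega
    · rw [hPf] at hr ⊢
      simp only [pow_one, Nat.cast_one, one_mul] at hr
      omega
  -- parity of numerators
  have hparz : ∀ i, (z i).num % 2 = (collatzPf n p i : ℤ) := by
    intro i
    show ((collatzA n p i : ℚ) / (DZ : ℚ)).num % 2 = _
    rw [collatz_num_parity _ _ hDodd hDZ0]
    exact hparA i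
  -- the step lemma
  have hstep : ∀ i, collatzTQ (z i) = z (i + 1) := by
    intro i
    unfold collatzTQ
    have hle := collatzPf_le n p i
    have hr := hrecQ i
    rcases Nat.le_one_iff_eq_zero_or_eq_one.mp hle with hPf | hPf
    · rw [if_pos (by rw [hparz i, hPf]; norm_num)]
      rw [hPf] at hr
      push_cast at hr
      simp only [pow_zero, one_mul, add_zero] at hr
      rw [← hr]; ring
    · rw [if_neg (by rw [hparz i, hPf]; norm_num)]
      rw [hPf] at hr
      push_cast at hr
      simp only [pow_one] at hr
      rw [div_eq_iff (by norm_num : (2:ℚ) ≠ 0)]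
      linarith
  have hiter : ∀ m, collatzTQ^[m] (z 0) = z m := by
    intro m
    induction m with
    | zero => rfl
    | succ m ih => rw [Function.iterate_succ_apply', ih, hstep]
  refine ⟨collatzA n p 0, z 0, ?_, ?_, ?_⟩
  · show (collatzA n p 0 : ℚ) / (DZ : ℚ) = _
    rw [hDZ]
    push_cast
    ring_nf
  · rw [hiter n]
    show (collatzA n p n : ℚ) / (DZ : ℚ) = (collatzA n p 0 : ℚ) / (DZ : ℚ)
    rw [collatzA_periodic]
  · intro i
    rw [hiter i, hparz i]
    unfold collatzPf
    rw [dif_neg hn0]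
    have : (⟨(i : ℕ) % n, Nat.mod_lt _ (Nat.pos_of_ne_zero hn0)⟩ : Fin n) = i :=
      Fin.ext (Nat.mod_eq_of_lt i.isLt)
    rw [this]
end
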